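/- arXiv:math/0407108 — 3 statements merged into one kernel-verified Lean document; each statement's English description precedes it below -/
import Mathlib

section
/- Define elements f^n_i in the n-fold tensor power Λ^{⊗n} by f^0_0 = 1, f^1_0 = x, f^1_1 = y, f^n_{-1} = f^n_{n+1} = 0, and f^n_i = f^{n-1}_{i-1} ⊗ y + q^i · f^{n-1}_i ⊗ x. Then for all n ≥ 1 and 0 ≤ i ≤ n, one also has f^n_i = x ⊗ f^{n-1}_i + q^{n-i} · y ⊗ f^{n-1}_{i-1}. -/
noncomputable section

open FreeAlgebra

/-- The relations defining `Λ_q = k⟨x,y⟩/(x², xy + q·yx, y²)`. -/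
inductive LamRel (k : Type) [Field k] (q : k) :
    FreeAlgebra k (Fin 2) → FreeAlgebra k (Fin 2) → Prop
  | xx : LamRel k q (ι k 0 * ι k 0) 0
  | xy : LamRel k q (ι k 0 * ι k 1 + q • (ι k 1 * ι k 0)) 0
  | yy : LamRel k q (ι k 1 * ι k 1) 0

/-- The algebra `Λ_q`. -/
abbrev Lam (k : Type) [Field k] (q : k) := RingQuot (LamRel k q)

/-- The image of the generator `x` in `Λ_q`. -/
def lx (k : Type) [Field k] (q : k) : Lam k q := RingQuot.mkAlgHom k (LamRel k q) (ι k 0)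

/-- The image of the generator `y` in `Λ_q`. -/
def ly (k : Type) [Field k] (q : k) : Lam k q := RingQuot.mkAlgHom k (LamRel k q) (ι k 1)


/-- The elements `f^n_i` in the `n`-fold tensor power `Λ^{⊗n}`, realized inside the
tensor algebra `T(Λ) = ⊕ₙ Λ^{⊗n}` (where multiplication is the tensor concatenation).
They are defined by `f⁰₀ = 1`, `fⁿᵢ = fⁿ⁻¹ᵢ₋₁ ⊗ y + qⁱ·fⁿ⁻¹ᵢ ⊗ x`,
with the conventions `fⁿ₋₁ = fⁿₙ₊₁ = 0`. -/
def ff (k : Type) [Field k] (q : k) : ℕ → ℕ → TensorAlgebra k (Lam k q)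
  | 0, 0 => 1
  | 0, _ + 1 => 0
  | n + 1, 0 => ff k q n 0 * TensorAlgebra.ι k (lx k q)
  | n + 1, i + 1 =>
      ff k q n i * TensorAlgebra.ι k (ly k q) +
        q ^ (i + 1) • (ff k q n (i + 1) * TensorAlgebra.ι k (lx k q))

lemma ff_zero_of_lt (k : Type) [Field k] (q : k) : ∀ n i : ℕ, n < i → ff k q n i = 0 := by
  intro n
  induction n with
  | zero => intro i hi; match i, hi with
    | i + 1, _ => rfl
  | succ n ih =>
    intro i hi
    match i, hi with
    | j + 1, hi =>
      have h1 : ff k q n j = 0 := ih j (by omega)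
      have h2 : ff k q n (j + 1) = 0 := ih (j + 1) (by omega)
      show ff k q n j * _ + _ • (ff k q n (j+1) * _) = 0
      rw [h1, h2]; simp

lemma ff_comm_x (k : Type) [Field k] (q : k) :
    ∀ n : ℕ, ff k q n 0 * TensorAlgebra.ι k (lx k q)
      = TensorAlgebra.ι k (lx k q) * ff k q n 0 := by
  intro n
  induction n with
  | zero => show (1:TensorAlgebra k (Lam k q)) * _ = _ * 1; rw [one_mul, mul_one]
  | succ n ih =>
    show (ff k q n 0 * _) * _ = _ * (ff k q n 0 * _)
    rw [ih, mul_assoc, ih]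

lemma ff_left_zero (k : Type) [Field k] (q : k) (n : ℕ) :
    ff k q (n + 1) 0 = TensorAlgebra.ι k (lx k q) * ff k q n 0 := ff_comm_x k q n

lemma ff_key (k : Type) [Field k] (q : k) :
    ∀ n j : ℕ, ff k q (n + 1) (j + 1) =
      TensorAlgebra.ι k (lx k q) * ff k q n (j + 1) +
        q ^ (n - j) • (TensorAlgebra.ι k (ly k q) * ff k q n j) := by
  intro n
  induction n with
  | zero =>
    intro j
    match j with
    | 0 =>
      show (1:TensorAlgebra k (Lam k q)) * _ + q^1 • ((0:TensorAlgebra k (Lam k q)) * _)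
        = _ * 0 + q^0 • (_ * 1)
      simp
    | j + 1 =>
      show (0:TensorAlgebra k (Lam k q)) * _ + q^(j+2) • ((0:TensorAlgebra k (Lam k q)) * _)
        = _ * 0 + _ • (_ * 0)
      simp
  | succ n ih =>
    intro j
    set X := TensorAlgebra.ι k (lx k q) with hX
    set Y := TensorAlgebra.ι k (ly k q) with hY
    match j with
    | 0 =>
      have d1 : ff k q (n+1) 1 = ff k q n 0 * Y + q^1 • (ff k q n 1 * X) := rfl
      have dL : ff k q (n+2) 1 = ff k q (n+1) 0 * Y + q^1 • (ff k q (n+1) 1 * X) := rfl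
      conv_rhs => rw [d1, ff_left_zero k q n]
      rw [dL, ff_left_zero k q n, ih 0]
      simp only [Nat.sub_zero, Nat.add_sub_cancel, pow_one, add_mul, mul_add, smul_mul_assoc,
        mul_smul_comm, smul_add, smul_smul, mul_assoc, ← pow_succ']
      rw [ff_comm_x k q n]
      abel
    | j + 1 =>
      have d2 : ff k q (n+1) (j+2) = ff k q n (j+1) * Y + q^(j+2) • (ff k q n (j+2) * X) := rfl
      have d1 : ff k q (n+1) (j+1) = ff k q n j * Y + q^(j+1) • (ff k q n (j+1) * X) := rfl
      have dL : ff k q (n+2) (j+2) = ff k q (n+1) (j+1) * Y + q^(j+2) • (ff k q (n+1) (j+2) * X) := rfl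
      conv_rhs => rw [d2, d1]
      rw [dL, ih j, ih (j+1)]
      by_cases h : j < n
      · have e1 : n - j = n - (j+1) + 1 := by omega
        have e2 : j + 2 + (n - (j+1)) = 1 + n := by omega
        have e3 : n - j + (j + 1) = 1 + n := by omega
        have ej : j + 1 + 1 = j + 2 := rfl
        have e4 : n + 1 - (j + 1) = n - j := by omega
        simp only [e4, add_mul, mul_add, smul_mul_assoc, mul_smul_comm, smul_add, smul_smul,
          ← pow_add, mul_assoc, e2, e3, e1, ej,
          show n - (j+1) + 1 + (j+1) = 1 + n from by omega]
        abel
      · have z1 : ff k q n (j+1) = 0 := ff_zero_of_lt k q n (j+1) (by omega)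
        have z2 : ff k q n (j+2) = 0 := ff_zero_of_lt k q n (j+2) (by omega)
        simp [z1, z2, mul_assoc]


/-- For all `n ≥ 1` and `0 ≤ i ≤ n` one also has
`fⁿᵢ = x ⊗ fⁿ⁻¹ᵢ + q^{n-i} · y ⊗ fⁿ⁻¹ᵢ₋₁` (with `fⁿ⁻¹₋₁ = 0`). -/
theorem ff_left_recursion (k : Type) [Field k] (q : k) (n i : ℕ) (hi : i ≤ n + 1) :
    (ff k q (n + 1) 0 = TensorAlgebra.ι k (lx k q) * ff k q n 0) ∧
    (∀ j : ℕ, i = j + 1 →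
      ff k q (n + 1) (j + 1) =
        TensorAlgebra.ι k (lx k q) * ff k q n (j + 1) +
          q ^ (n - j) • (TensorAlgebra.ι k (ly k q) * ff k q n j)) :=
  ⟨ff_left_zero k q n, fun j _ => ff_key k q n j⟩
end
end

section
/- With f^n_i defined by f^0_0 = 1, f^1_0 = x, f^1_1 = y, f^n_{-1} = f^n_{n+1} = 0, and f^n_i = f^{n-1}_{i-1} ⊗ y + q^i f^{n-1}_i ⊗ x, the comultiplication identity f^n_i = Σ_{j = max(0, i+t-n)}^{min(t,i)} q^{j(n-i+j-t)} · f^t_j ⊗ f^{n-t}_{i-j} holds for every 0 ≤ t ≤ n. -/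
noncomputable section

open FreeAlgebra

variable {k : Type} [Field k] {q : k}

/-- `fⁿᵢ = 0` for `i > n`. -/
lemma ff_zero (n : ℕ) : ∀ i, n < i → ff k q n i = 0 := by
  induction n with
  | zero =>
    intro i h
    match i, h with
    | i + 1, _ => rfl
  | succ n ih =>
    intro i h
    match i, h with
    | i + 1, h =>
      show ff k q n i * _ + q ^ (i+1) • (ff k q n (i+1) * _) = 0
      rw [ih i (by omega), ih (i+1) (by omega), zero_mul, zero_mul, smul_zero, add_zero]

/-- The comultiplication identity, for all `i` (no upper bound on `i` needed). -/
lemma ff_key_s5 (n : ℕ) : ∀ t i, t ≤ n →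
    ff k q n i =
      ∑ j ∈ Finset.Icc (i + t - n) (min t i),
        q ^ (j * (n - i + j - t)) • (ff k q t j * ff k q (n - t) (i - j)) := by
  induction n with
  | zero =>
    intro t i ht
    interval_cases t
    match i with
    | 0 => simp [ff]
    | i + 1 =>
      rw [ff_zero 0 (i+1) (by omega), Finset.Icc_eq_empty (by omega), Finset.sum_empty]
  | succ n ih =>
    intro t i ht
    rcases eq_or_lt_of_le ht with rfl | ht'
    · -- case t = n + 1
      rcases le_or_gt i (n+1) with hi | hi
      · have hC : Finset.Icc (i + (n+1) - (n+1)) (min (n+1) i) = {i} := by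
          rw [show i + (n+1) - (n+1) = i from by omega, min_eq_right hi, Finset.Icc_self]
        rw [hC, Finset.sum_singleton, show n + 1 - i + i - (n + 1) = 0 from by omega,
          Nat.mul_zero, pow_zero, one_smul, Nat.sub_self, Nat.sub_self]
        show ff k q (n+1) i = ff k q (n+1) i * ff k q 0 0
        rw [show ff k q 0 0 = 1 from rfl, mul_one]
      · rw [ff_zero (n+1) i (by omega), Finset.Icc_eq_empty (by omega), Finset.sum_empty]
    · -- case t ≤ n
      have htn : t ≤ n := by omega
      match i with
      | 0 =>
        have hC : Finset.Icc (0 + t - (n+1)) (min t 0) = {0} := by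
          rw [show 0 + t - (n+1) = 0 from by omega, Nat.min_zero, Finset.Icc_self]
        rw [hC, Finset.sum_singleton, Nat.zero_mul, pow_zero, one_smul, Nat.sub_zero]
        have h1 : ff k q (n+1) 0 = ff k q n 0 * TensorAlgebra.ι k (lx k q) := rfl
        have h2 : n + 1 - t = (n - t) + 1 := by omega
        have h3 : ff k q (n+1-t) 0 = ff k q (n-t) 0 * TensorAlgebra.ι k (lx k q) := by
          rw [h2]
          rfl
        rw [h1, h3, ← mul_assoc]
        congr 1
        rw [ih t 0 htn,
          show Finset.Icc (0 + t - n) (min t 0) = {0} from by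
            rw [show 0 + t - n = 0 from by omega, Nat.min_zero, Finset.Icc_self],
          Finset.sum_singleton, Nat.zero_mul, pow_zero, one_smul, Nat.sub_zero]
      | m + 1 =>
        have hb : m + 1 + t - (n + 1) = m + t - n := by omega
        have he : n + 1 - (m + 1) = n - m := by omega
        rw [hb]
        simp only [he]
        set X := TensorAlgebra.ι k (lx k q) with hX
        set Y := TensorAlgebra.ι k (ly k q) with hY
        have hff : ff k q (n+1) (m+1) = ff k q n m * Y + q ^ (m+1) • (ff k q n (m+1) * X) := rfl
        rw [hff]
        have hexp : ∀ j ∈ Finset.Icc (m + t - n) (min t (m+1)),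
            q ^ (j * (n - m + j - t)) • (ff k q t j * ff k q (n + 1 - t) (m + 1 - j))
            = (if j ≤ m then q ^ (j * (n - m + j - t)) • (ff k q t j * ff k q (n - t) (m - j)) * Y
                else 0)
              + q ^ (j * (n - m + j - t) + (m + 1 - j)) •
                  (ff k q t j * ff k q (n - t) (m + 1 - j)) * X := by
          intro j hj
          simp only [Finset.mem_Icc] at hj
          rcases le_or_gt j m with hjm | hjm
          · rw [if_pos hjm]
            have h1 : n + 1 - t = (n - t) + 1 := by omega
            have h2 : m + 1 - j = (m - j) + 1 := by omega
            rw [h1, h2,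
              show ff k q (n - t + 1) (m - j + 1)
                = ff k q (n-t) (m-j) * Y + q ^ (m - j + 1) • (ff k q (n-t) (m-j+1) * X) from rfl]
            simp only [mul_add, smul_add, mul_smul_comm, smul_smul, ← pow_add,
              smul_mul_assoc, mul_assoc]
          · have hj1 : j = m + 1 := by omega
            subst hj1
            rw [if_neg (by omega), show m + 1 - (m + 1) = 0 from by omega]
            have h1 : n + 1 - t = (n - t) + 1 := by omega
            rw [h1, show ff k q (n - t + 1) 0 = ff k q (n-t) 0 * X from rfl]
            simp only [Nat.add_zero, zero_add, smul_mul_assoc, mul_assoc]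
        rw [Finset.sum_congr rfl hexp, Finset.sum_add_distrib]
        congr 1
        · -- the `⊗ y` part of the sum
          have hsub : Finset.Icc (m + t - n) (min t m) ⊆ Finset.Icc (m + t - n) (min t (m+1)) :=
            Finset.Icc_subset_Icc le_rfl (by omega)
          rw [← Finset.sum_subset hsub (by
            intro j hjC hjA
            simp only [Finset.mem_Icc] at hjC hjA
            rw [if_neg (by omega)])]
          rw [Finset.sum_congr rfl (fun j hj => by
            simp only [Finset.mem_Icc] at hj
            rw [if_pos (by omega)]), ← Finset.sum_mul, ← ih t m htn]
        · -- the `⊗ x` part of the sum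
          have hsub : Finset.Icc (m + 1 + t - n) (min t (m+1))
              ⊆ Finset.Icc (m + t - n) (min t (m+1)) :=
            Finset.Icc_subset_Icc (by omega) le_rfl
          rw [← Finset.sum_subset hsub (by
            intro j hjC hjB
            simp only [Finset.mem_Icc] at hjC hjB
            rw [ff_zero (n - t) (m + 1 - j) (by omega), mul_zero, smul_zero, zero_mul])]
          rw [Finset.sum_congr rfl (fun j hj => by
            simp only [Finset.mem_Icc] at hj
            have h3 : j ≤ m + 1 := by omega
            have e1 : n - m + j - t = (n - (m+1) + j - t) + 1 := by omega
            have ekey : j * (n - m + j - t) + (m + 1 - j)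
                = (m + 1) + j * (n - (m+1) + j - t) := by
              rw [e1, Nat.mul_add, Nat.mul_one]
              generalize j * (n - (m+1) + j - t) = b
              omega
            rw [ekey, pow_add, mul_smul, smul_mul_assoc]),
            ← Finset.smul_sum, ← Finset.sum_mul, ← ih t (m+1) htn]

/-- The comultiplication identity
`fⁿᵢ = Σ_{j = max(0, i+t-n)}^{min(t,i)} q^{j(n-i+j-t)} · fᵗⱼ ⊗ fⁿ⁻ᵗᵢ₋ⱼ`
for every `0 ≤ t ≤ n` (and `0 ≤ i ≤ n`), where `Λ^{⊗t} ⊗ Λ^{⊗(n-t)}`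
is identified with `Λ^{⊗n}` via multiplication in the tensor algebra.
(Note that `i + t - n` is truncated natural subtraction, i.e. `max (0, i+t-n)`.) -/
theorem ff_comultiplication (k : Type) [Field k] (q : k) (n i t : ℕ)
    (hi : i ≤ n) (ht : t ≤ n) :
    ff k q n i =
      ∑ j ∈ Finset.Icc (i + t - n) (min t i),
        q ^ (j * (n - i + j - t)) • (ff k q t j * ff k q (n - t) (i - j)) := by
  exact ff_key_s5 n t i ht
end
end

section
/- The element f^n_i equals the sum over all n-fold tensors w of x's and y's with exactly i occurrences of y, with coefficient q^{α(w)}, where α(w) is the number of inversions, i.e. the number of pairs (a,b) with a < b such that position a holds y and position b holds x. -/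
noncomputable section

open FreeAlgebra

/-- The number of inversions of a word `w` in `x`'s and `y`'s (encoded as
`w : Fin n → Bool`, `true` = `y`): the number of pairs `a < b` with `y` in
position `a` and `x` in position `b`. -/
def inversions {n : ℕ} (w : Fin n → Bool) : ℕ :=
  (Finset.univ.filter fun p : Fin n × Fin n => p.1 < p.2 ∧ w p.1 = true ∧ w p.2 = false).card


lemma count_snoc {n : ℕ} (w : Fin n → Bool) (b : Bool) :
    (Finset.univ.filter fun a : Fin (n+1) => (Fin.snoc w b : Fin (n+1) → Bool) a = true).card
      = (Finset.univ.filter fun a => w a = true).card + (if b then 1 else 0) := by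
  simp only [Finset.card_filter]
  rw [Fin.sum_univ_castSucc]
  simp [Fin.snoc_castSucc, Fin.snoc_last]

lemma inversions_snoc {n : ℕ} (w : Fin n → Bool) (b : Bool) :
    inversions (Fin.snoc w b) =
      inversions w + (if b then 0 else (Finset.univ.filter fun a => w a = true).card) := by
  simp only [inversions, Finset.card_filter, Fintype.sum_prod_type]
  simp_rw [Fin.sum_univ_castSucc]
  simp only [Fin.snoc_castSucc, Fin.snoc_last, Fin.castSucc_lt_castSucc_iff,
    Fin.castSucc_lt_last, (Fin.le_last _).not_gt, lt_irrefl, false_and, if_false, true_and,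
    Finset.sum_const_zero, add_zero, Finset.sum_add_distrib]
  cases b <;> simp

lemma rhs_decomp (k : Type) [Field k] (q : k) (n i : ℕ) :
    (∑ w ∈ Finset.univ.filter
          (fun w : Fin (n+1) → Bool => (Finset.univ.filter fun a => w a = true).card = i),
        q ^ inversions w •
          (List.ofFn fun a : Fin (n+1) =>
            TensorAlgebra.ι k (if w a then ly k q else lx k q)).prod)
  = (∑ w ∈ Finset.univ.filter
          (fun w : Fin n → Bool => (Finset.univ.filter fun a => w a = true).card + 1 = i),
        q ^ inversions w •
          ((List.ofFn fun a : Fin n =>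
            TensorAlgebra.ι k (if w a then ly k q else lx k q)).prod
            * TensorAlgebra.ι k (ly k q)))
  + (∑ w ∈ Finset.univ.filter
          (fun w : Fin n → Bool => (Finset.univ.filter fun a => w a = true).card = i),
        q ^ (inversions w + (Finset.univ.filter fun a => w a = true).card) •
          ((List.ofFn fun a : Fin n =>
            TensorAlgebra.ι k (if w a then ly k q else lx k q)).prod
            * TensorAlgebra.ι k (lx k q))) := by
  rw [Finset.sum_filter, Finset.sum_filter, Finset.sum_filter,
    ← Equiv.sum_comp (Fin.snocEquiv (fun _ => Bool)), Fintype.sum_prod_type]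
  rw [Fintype.sum_bool]
  congr 1
  · apply Finset.sum_congr rfl
    intro w _
    have hsnoc : ((Fin.snocEquiv fun _ => Bool) (true, w) : Fin (n+1) → Bool)
        = Fin.snoc w true := rfl
    simp only [hsnoc, count_snoc, inversions_snoc, List.ofFn_succ',
      Fin.snoc_castSucc, Fin.snoc_last, List.concat_eq_append, List.prod_append,
      List.prod_cons, List.prod_nil, mul_one, if_true, add_zero]
  · apply Finset.sum_congr rfl
    intro w _
    have hsnoc : ((Fin.snocEquiv fun _ => Bool) (false, w) : Fin (n+1) → Bool)
        = Fin.snoc w false := rfl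
    simp only [hsnoc, count_snoc, inversions_snoc, List.ofFn_succ',
      Fin.snoc_castSucc, Fin.snoc_last, List.concat_eq_append, List.prod_append,
      List.prod_cons, List.prod_nil, mul_one, Bool.false_eq_true, if_false, add_zero]

/-- `fⁿᵢ` equals the sum, over all `n`-fold tensors `w` of `x`'s and `y`'s with exactly
`i` occurrences of `y`, of `q^{α(w)} · w`, where `α(w)` is the number of inversions of `w`. -/
theorem ff_eq_sum_words (k : Type) [Field k] (q : k) (n i : ℕ) (hi : i ≤ n) :
    ff k q n i =
      ∑ w ∈ Finset.univ.filter
          (fun w : Fin n → Bool => (Finset.univ.filter fun a => w a = true).card = i),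
        q ^ inversions w •
          (List.ofFn fun a : Fin n =>
            TensorAlgebra.ι k (if w a then ly k q else lx k q)).prod := by
  clear hi
  induction n generalizing i with
  | zero =>
    match i with
    | 0 =>
      rw [show ff k q 0 0 = 1 from rfl]
      rw [Finset.sum_filter, Finset.univ_unique, Finset.sum_singleton]
      simp [inversions]
    | i + 1 =>
      rw [show ff k q 0 (i+1) = 0 from rfl]
      rw [Finset.sum_filter, Finset.univ_unique, Finset.sum_singleton]
      simp
  | succ n IH =>
    rw [rhs_decomp]
    match i with
    | 0 =>
      rw [show ff k q (n+1) 0 = ff k q n 0 * TensorAlgebra.ι k (lx k q) from rfl]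
      have h1 : (Finset.univ.filter
          (fun w : Fin n → Bool => (Finset.univ.filter fun a => w a = true).card + 1 = 0)) = ∅ := by
        apply Finset.filter_false_of_mem; intro w _; omega
      rw [h1, Finset.sum_empty, zero_add, IH 0, Finset.sum_mul]
      apply Finset.sum_congr rfl
      intro w hw
      simp only [Finset.mem_filter] at hw
      rw [hw.2, add_zero, smul_mul_assoc]
    | i + 1 =>
      rw [show ff k q (n+1) (i+1) = ff k q n i * TensorAlgebra.ι k (ly k q) +
        q ^ (i + 1) • (ff k q n (i + 1) * TensorAlgebra.ι k (lx k q)) from rfl]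
      congr 1
      · rw [IH i, Finset.sum_mul]
        simp only [add_left_inj]
        apply Finset.sum_congr rfl
        intro w _
        rw [smul_mul_assoc]
      · rw [IH (i+1), Finset.sum_mul, Finset.smul_sum]
        apply Finset.sum_congr rfl
        intro w hw
        simp only [Finset.mem_filter] at hw
        rw [hw.2, smul_mul_assoc, smul_smul, ← pow_add, add_comm]
end
end
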